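/- arXiv:2512.08852 — 3 statements merged into one kernel-verified Lean document; each statement's English description precedes it below -/
import Mathlib

section
/- Let f ∈ ℝ^k be a unit vector, let σ ∈ {−1, 1}, and let d_i, d_j ∈ ℝ^k satisfy ⟨f, d_i⟩ = ⟨f, d_j⟩ = 0. Define X_{ij}(t) = (σ + t² ⟨d_i, d_j⟩) / (√(1 + t² ‖d_i‖²) · √(1 + t² ‖d_j‖²)) for t ≥ 0. Then the one-sided limit lim_{t → 0⁺} ((2/π) arcsin(X_{ij}(t)) − σ) / t exists and equals −(2/π) · σ · ‖d_i − σ d_j‖. -/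
open RealInnerProductSpace Filter

/-- Half-angle identity: `arcsin y = π/2 - 2 arcsin √((1-y)/2)` on `[-1,1]`. -/
lemma aux_arcsin_half (y : ℝ) (hy1 : -1 ≤ y) (hy2 : y ≤ 1) :
    Real.arcsin y = Real.pi / 2 - 2 * Real.arcsin (Real.sqrt ((1 - y) / 2)) := by
  set s := Real.sqrt ((1 - y) / 2) with hs
  have hs0 : (0:ℝ) ≤ (1 - y) / 2 := by linarith
  have hsq : s ^ 2 = (1 - y) / 2 := Real.sq_sqrt hs0
  have hsnn : 0 ≤ s := Real.sqrt_nonneg _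
  have hsle : s ≤ 1 := by nlinarith [hsq, hsnn]
  have h1 : (0:ℝ) ≤ 2 * Real.arcsin s := by
    have := Real.arcsin_nonneg.mpr hsnn; linarith
  have h2 : 2 * Real.arcsin s ≤ Real.pi := by
    have := Real.arcsin_le_pi_div_two s; linarith
  have hcos : Real.cos (2 * Real.arcsin s) = y := by
    rw [Real.cos_two_mul]
    have hsin : Real.sin (Real.arcsin s) = s := Real.sin_arcsin (by linarith) hsle
    have hpyth := Real.sin_sq_add_cos_sq (Real.arcsin s)
    nlinarith [hpyth, hsin, hsq]
  have harccos : Real.arccos y = 2 * Real.arcsin s := by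
    rw [← hcos, Real.arccos_cos h1 h2]
  have := Real.arccos_eq_pi_div_two_sub_arcsin y
  linarith [harccos, this]

/-- `arcsin u / u → 1` as `u → 0`, packaged as a total function continuous at 0. -/
lemma aux_arcsin_div_tendsto :
    Tendsto (fun u : ℝ => if u = 0 then 1 else Real.arcsin u / u) (nhds 0) (nhds 1) := by
  set A : ℝ → ℝ := fun u => if u = 0 then 1 else Real.arcsin u / u with hA
  have hderiv : HasDerivAt Real.arcsin 1 0 := by
    have := Real.hasDerivAt_arcsin (by norm_num : (0:ℝ) ≠ -1) (by norm_num : (0:ℝ) ≠ 1)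
    simpa using this
  have hslope : Tendsto (slope Real.arcsin 0) (nhdsWithin 0 {(0:ℝ)}ᶜ) (nhds 1) :=
    hasDerivAt_iff_tendsto_slope.mp hderiv
  have h1 : Tendsto A (nhdsWithin 0 {(0:ℝ)}ᶜ) (nhds 1) := by
    refine hslope.congr' ?_
    filter_upwards [self_mem_nhdsWithin] with u hu
    have hu0 : u ≠ 0 := hu
    simp [slope, A, hu0, Real.arcsin_zero, div_eq_inv_mul]
  have h2 : Tendsto A (pure (0:ℝ)) (nhds 1) := by
    have hA0 : A 0 = 1 := by simp [A]
    rw [tendsto_pure_left]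
    intro sset hsset
    rw [hA0]; exact mem_of_mem_nhds hsset
  have := h1.sup h2
  rwa [nhdsNE_sup_pure] at this

set_option maxHeartbeats 1000000 in
/-- One-sided directional derivative of `(2/π) arcsin X_{ij}(t)` at a boundary
point `X_{ij} = σ ∈ {-1, +1}`. -/
theorem stmt_16 (k : ℕ) (f : EuclideanSpace ℝ (Fin k)) (hf : ‖f‖ = 1)
    (σ : ℝ) (hσ : σ = -1 ∨ σ = 1)
    (di dj : EuclideanSpace ℝ (Fin k)) (hdi : ⟪f, di⟫ = 0) (hdj : ⟪f, dj⟫ = 0)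
    (X : ℝ → ℝ)
    (hX : ∀ t, X t = (σ + t ^ 2 * ⟪di, dj⟫) /
        (Real.sqrt (1 + t ^ 2 * ‖di‖ ^ 2) * Real.sqrt (1 + t ^ 2 * ‖dj‖ ^ 2))) :
    Tendsto (fun t : ℝ => ((2 / Real.pi) * Real.arcsin (X t) - σ) / t)
      (nhdsWithin (0 : ℝ) (Set.Ioi 0))
      (nhds (-(2 / Real.pi) * σ * ‖di - σ • dj‖)) := by
  have hσ2 : σ * σ = 1 := by rcases hσ with h | h <;> rw [h] <;> norm_num
  have habsσ : |σ| = 1 := by rcases hσ with h | h <;> rw [h] <;> norm_num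
  set a : ℝ := ⟪di, dj⟫ with ha
  set b : ℝ := ‖di‖ ^ 2 with hb
  set c : ℝ := ‖dj‖ ^ 2 with hc
  set D : ℝ := ‖di - σ • dj‖ with hD
  have hDnn : 0 ≤ D := norm_nonneg _
  have hD2 : D ^ 2 = b + c - 2 * σ * a := by
    have h1 : ‖di - σ • dj‖ ^ 2 = ‖di‖ ^ 2 - 2 * ⟪di, σ • dj⟫ + ‖σ • dj‖ ^ 2 :=
      norm_sub_sq_real di (σ • dj)
    rw [real_inner_smul_right, norm_smul] at h1
    simp only [Real.norm_eq_abs, habsσ, one_mul] at h1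
    rw [hD, h1, ← ha, ← hb, ← hc]; ring
  set P : ℝ → ℝ := fun t => Real.sqrt (1 + t ^ 2 * b) * Real.sqrt (1 + t ^ 2 * c) with hP
  set Q : ℝ → ℝ := fun t => 1 + σ * a * t ^ 2 with hQ
  have hbnn : 0 ≤ b := sq_nonneg _
  have hcnn : 0 ≤ c := sq_nonneg _
  have hP1 : ∀ t, 1 ≤ P t := by
    intro t
    have h1 : (1:ℝ) ≤ Real.sqrt (1 + t ^ 2 * b) := Real.one_le_sqrt.mpr (by nlinarith [sq_nonneg t])
    have h2 : (1:ℝ) ≤ Real.sqrt (1 + t ^ 2 * c) := Real.one_le_sqrt.mpr (by nlinarith [sq_nonneg t])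
    calc (1:ℝ) = 1 * 1 := by ring
    _ ≤ _ := mul_le_mul h1 h2 (by norm_num) (by linarith)
  have hPpos : ∀ t, 0 < P t := fun t => lt_of_lt_of_le one_pos (hP1 t)
  have hPsq : ∀ t, P t ^ 2 = (1 + t ^ 2 * b) * (1 + t ^ 2 * c) := by
    intro t
    show (Real.sqrt (1 + t ^ 2 * b) * Real.sqrt (1 + t ^ 2 * c)) ^ 2 = _
    rw [mul_pow, Real.sq_sqrt (by nlinarith [sq_nonneg t]),
      Real.sq_sqrt (by nlinarith [sq_nonneg t])]
  -- Cauchy–Schwarz: |σ + t² a| ≤ P t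
  have hCS : ∀ t : ℝ, |σ + t ^ 2 * a| ≤ P t := by
    intro t
    set u := f + t • di with hu
    set v := σ • f + t • dj with hv
    have hff : ⟪f, f⟫ = 1 := by rw [real_inner_self_eq_norm_sq, hf]; norm_num
    have hdif : ⟪di, f⟫ = 0 := by rw [real_inner_comm]; exact hdi
    have hinner : ⟪u, v⟫ = σ + t ^ 2 * a := by
      simp only [hu, hv, inner_add_left, inner_add_right, real_inner_smul_left,
        real_inner_smul_right, hff, hdi, hdj, hdif, ← ha]
      ring
    have hnu : ‖u‖ = Real.sqrt (1 + t ^ 2 * b) := by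
      have h1 : ‖u‖ ^ 2 = 1 + t ^ 2 * b := by
        rw [hu, norm_add_sq_real, real_inner_smul_right, hdi, norm_smul, hf]
        simp only [Real.norm_eq_abs]
        rw [mul_pow, sq_abs, ← hb]
        ring
      rw [← h1, Real.sqrt_sq (norm_nonneg u)]
    have hnv : ‖v‖ = Real.sqrt (1 + t ^ 2 * c) := by
      have h1 : ‖v‖ ^ 2 = 1 + t ^ 2 * c := by
        rw [hv, norm_add_sq_real, real_inner_smul_right, real_inner_smul_left, hdj,
          norm_smul, norm_smul, hf]
        simp only [Real.norm_eq_abs, habsσ]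
        rw [mul_pow, mul_pow, sq_abs, ← hc]
        ring
      rw [← h1, Real.sqrt_sq (norm_nonneg v)]
    calc |σ + t ^ 2 * a| = |⟪u, v⟫| := by rw [hinner]
    _ ≤ ‖u‖ * ‖v‖ := abs_real_inner_le_norm u v
    _ = P t := by rw [hnu, hnv]
  have hXle : ∀ t, |X t| ≤ 1 := by
    intro t
    rw [hX t]
    show |(σ + t ^ 2 * a) / P t| ≤ 1
    rw [abs_div, abs_of_pos (hPpos t), div_le_one (hPpos t)]
    exact hCS t
  have hσXle : ∀ t, σ * X t ≤ 1 := by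
    intro t
    calc σ * X t ≤ |σ * X t| := le_abs_self _
    _ = |σ| * |X t| := abs_mul _ _
    _ ≤ 1 := by rw [habsσ, one_mul]; exact hXle t
  have hσXge : ∀ t, -1 ≤ σ * X t := by
    intro t
    have h : |σ * X t| ≤ 1 := by rw [abs_mul, habsσ, one_mul]; exact hXle t
    linarith [neg_abs_le (σ * X t)]
  -- σ * X t = Q t / P t
  have hσX : ∀ t, σ * X t = Q t / P t := by
    intro t
    rw [hX t]
    show σ * ((σ + t ^ 2 * a) / P t) = Q t / P t
    rw [mul_div_assoc']
    congr 1
    show σ * (σ + t ^ 2 * a) = 1 + σ * a * t ^ 2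
    linear_combination hσ2
  -- limits of the building blocks
  have hPcont : Tendsto P (nhds 0) (nhds 1) := by
    have hcont : Continuous P := by
      rw [hP]
      exact (Real.continuous_sqrt.comp (by continuity)).mul
        (Real.continuous_sqrt.comp (by continuity))
    have hP0 : P 0 = 1 := by simp [hP]
    have := hcont.tendsto 0
    rwa [hP0] at this
  have hQcont : Tendsto Q (nhds 0) (nhds 1) := by
    have hcont : Continuous Q := by rw [hQ]; continuity
    have hQ0 : Q 0 = 1 := by simp [hQ]
    have := hcont.tendsto 0
    rwa [hQ0] at this
  have hnum : Tendsto (fun t : ℝ => b + c - 2 * σ * a + t ^ 2 * (b * c - a ^ 2))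
      (nhds 0) (nhds (b + c - 2 * σ * a)) := by
    have hcont : Continuous fun t : ℝ => b + c - 2 * σ * a + t ^ 2 * (b * c - a ^ 2) := by
      continuity
    have := hcont.tendsto 0
    norm_num at this
    convert this using 2
  have hRlim : Tendsto (fun t : ℝ => (b + c - 2 * σ * a + t ^ 2 * (b * c - a ^ 2)) /
      (P t * (P t + Q t))) (nhds 0) (nhds ((b + c - 2 * σ * a) / 2)) := by
    have hden : Tendsto (fun t => P t * (P t + Q t)) (nhds 0) (nhds 2) := by
      have h := hPcont.mul (hPcont.add hQcont)
      have h2 : ((1:ℝ) * (1 + 1)) = 2 := by norm_num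
      rwa [h2] at h
    exact hnum.div hden (by norm_num)
  have hQev : ∀ᶠ t in nhds (0:ℝ), 0 < Q t := hQcont.eventually (eventually_gt_nhds one_pos)
  -- eventual equality of (1 - σ X t)/t² with the renormalized formula, on Ioi 0
  have heq1 : (fun t : ℝ => (1 - σ * X t) / t ^ 2)
      =ᶠ[nhdsWithin (0:ℝ) (Set.Ioi 0)]
      (fun t : ℝ => (b + c - 2 * σ * a + t ^ 2 * (b * c - a ^ 2)) /
        (P t * (P t + Q t))) := by
    filter_upwards [eventually_nhdsWithin_of_eventually_nhds hQev, self_mem_nhdsWithin]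
      with t hQt ht
    have ht0 : (0:ℝ) < t := ht
    have hPt := hPpos t
    have hPQ : 0 < P t + Q t := by linarith
    have h1 : 1 - σ * X t = (P t - Q t) / P t := by
      rw [hσX t, one_sub_div (ne_of_gt hPt)]
    have hQteq : Q t = 1 + σ * a * t ^ 2 := rfl
    have hPQsq : (P t - Q t) * (P t + Q t)
        = t ^ 2 * (b + c - 2 * σ * a + t ^ 2 * (b * c - a ^ 2)) := by
      rw [hQteq]
      linear_combination hPsq t - t ^ 4 * a ^ 2 * hσ2
    rw [h1, div_div, div_eq_div_iff
      (ne_of_gt (mul_pos hPt (by positivity)))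
      (ne_of_gt (mul_pos hPt hPQ))]
    linear_combination P t * hPQsq
  have h1lim : Tendsto (fun t : ℝ => (1 - σ * X t) / t ^ 2)
      (nhdsWithin 0 (Set.Ioi 0)) (nhds (D ^ 2 / 2)) := by
    rw [hD2]
    exact (hRlim.mono_left nhdsWithin_le_nhds).congr' heq1.symm
  -- the sqrt function
  set cf : ℝ → ℝ := fun t => Real.sqrt ((1 - σ * X t) / (2 * t ^ 2)) with hcf
  have hclim : Tendsto cf (nhdsWithin 0 (Set.Ioi 0)) (nhds (D / 2)) := by
    have hg : Tendsto (fun t : ℝ => (1 - σ * X t) / (2 * t ^ 2))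
        (nhdsWithin 0 (Set.Ioi 0)) (nhds (D ^ 2 / 4)) := by
      have h := h1lim.div_const 2
      have hval : D ^ 2 / 2 / 2 = D ^ 2 / 4 := by ring
      rw [hval] at h
      refine h.congr fun t => ?_
      rw [div_div]
      ring_nf
    have hsqrt : Tendsto Real.sqrt (nhds (D ^ 2 / 4)) (nhds (D / 2)) := by
      have hv : Real.sqrt (D ^ 2 / 4) = D / 2 := by
        rw [show D ^ 2 / 4 = (D / 2) ^ 2 by ring, Real.sqrt_sq (by linarith)]
      rw [← hv]
      exact Real.continuous_sqrt.tendsto _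
    exact hsqrt.comp hg
  have htclim : Tendsto (fun t : ℝ => t * cf t) (nhdsWithin 0 (Set.Ioi 0)) (nhds 0) := by
    have hid : Tendsto (fun t : ℝ => t) (nhdsWithin (0:ℝ) (Set.Ioi 0)) (nhds 0) :=
      tendsto_id.mono_left nhdsWithin_le_nhds
    have := hid.mul hclim
    simpa using this
  set A : ℝ → ℝ := fun u => if u = 0 then 1 else Real.arcsin u / u with hA
  have hAcomp : Tendsto (fun t => A (t * cf t)) (nhdsWithin 0 (Set.Ioi 0)) (nhds 1) :=
    aux_arcsin_div_tendsto.comp htclim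
  -- Eventual identity for the main expression
  have hmain : (fun t : ℝ => ((2 / Real.pi) * Real.arcsin (X t) - σ) / t)
      =ᶠ[nhdsWithin (0:ℝ) (Set.Ioi 0)]
      (fun t : ℝ => (-σ * (4 / Real.pi)) * (A (t * cf t) * cf t)) := by
    filter_upwards [self_mem_nhdsWithin] with t ht
    have ht0 : (0:ℝ) < t := ht
    have hy1 : -1 ≤ σ * X t := hσXge t
    have hy2 : σ * X t ≤ 1 := hσXle t
    have harc : Real.arcsin (X t) = σ * Real.arcsin (σ * X t) := by
      rcases hσ with h | h <;> rw [h] <;> simp [Real.arcsin_neg]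
    have hhalf := aux_arcsin_half (σ * X t) hy1 hy2
    have hs_eq : Real.sqrt ((1 - σ * X t) / 2) = t * cf t := by
      have hsplit : (1 - σ * X t) / 2 = t ^ 2 * ((1 - σ * X t) / (2 * t ^ 2)) := by
        field_simp
      rw [hcf]
      rw [hsplit, Real.sqrt_mul (sq_nonneg t), Real.sqrt_sq (le_of_lt ht0)]
    have hπ : Real.pi ≠ 0 := Real.pi_ne_zero
    rw [harc, hhalf, hs_eq]
    by_cases hcz : cf t = 0
    · rw [hcz]
      simp only [mul_zero, Real.arcsin_zero, sub_zero]
      rw [div_eq_zero_iff]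
      left
      field_simp
      ring
    · have htc : t * cf t ≠ 0 := by
        have : 0 ≤ cf t := Real.sqrt_nonneg _
        positivity
      have hAval : A (t * cf t) = Real.arcsin (t * cf t) / (t * cf t) := by
        simp [hA, htc]
      rw [hAval]
      field_simp
      ring
  have hfinal : Tendsto (fun t => (-σ * (4 / Real.pi)) * (A (t * cf t) * cf t))
      (nhdsWithin (0:ℝ) (Set.Ioi 0)) (nhds (-(2 / Real.pi) * σ * D)) := by
    have h := (hAcomp.mul hclim).const_mul (-σ * (4 / Real.pi))
    have hval : (-σ * (4 / Real.pi)) * (1 * (D / 2)) = -(2 / Real.pi) * σ * D := by ring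
    rwa [hval] at h
  exact hfinal.congr' hmain.symm
end

section
/- Let f_i, f_j ∈ ℝ^k be unit vectors with |⟨f_i, f_j⟩| < 1, and let d_i, d_j ∈ ℝ^k satisfy ⟨f_i, d_i⟩ = ⟨f_j, d_j⟩ = 0. Then the function t ↦ (2/π) arcsin( ⟨(f_i + t d_i)/‖f_i + t d_i‖, (f_j + t d_j)/‖f_j + t d_j‖⟩ ) is differentiable at t = 0 with derivative (2/π) · (⟨f_i, d_j⟩ + ⟨f_j, d_i⟩) / √(1 − ⟨f_i, f_j⟩²). -/
open RealInnerProductSpace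

/-! Normalising `f + t • d` does not move the velocity `d` to first order, because `d ⟂ f` makes
`t ↦ ‖f + t • d‖` stationary at `t = 0`. The chain rule for `⟪·, ·⟫` and for `arcsin` then gives
the derivative. -/

section

variable {E : Type*} [NormedAddCommGroup E] [InnerProductSpace ℝ E]

theorem HasDerivAt.arcsin {f : ℝ → ℝ} {f' x : ℝ} (hf : HasDerivAt f f' x)
    (h₁ : f x ≠ -1) (h₂ : f x ≠ 1) :
    HasDerivAt (fun t => Real.arcsin (f t)) (f' / √(1 - f x ^ 2)) x := by
  rw [div_eq_mul_one_div, mul_comm]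
  exact (Real.hasDerivAt_arcsin h₁ h₂).comp x hf

theorem HasDerivAt.norm {u : ℝ → E} {u' : E} {x : ℝ} (hu : HasDerivAt u u' x) (h0 : u x ≠ 0) :
    HasDerivAt (fun t => ‖u t‖) (⟪u x, u'⟫ / ‖u x‖) x := by
  have hpos : 0 < ‖u x‖ := norm_pos_iff.mpr h0
  have hsqrt := (Real.hasDerivAt_sqrt (pow_pos hpos 2).ne').comp x hu.norm_sq
  simp only [Function.comp_def, Real.sqrt_sq (norm_nonneg _)] at hsqrt
  refine hsqrt.congr_deriv ?_
  field_simp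

theorem HasDerivAt.inv_norm_smul_of_inner_eq_zero {u : ℝ → E} {u' : E} {x : ℝ}
    (hu : HasDerivAt u u' x) (hunit : ‖u x‖ = 1) (horth : ⟪u x, u'⟫ = 0) :
    HasDerivAt (fun t => ‖u t‖⁻¹ • u t) u' x := by
  have hnorm : HasDerivAt (fun t => ‖u t‖) 0 x := by
    simpa [horth] using hu.norm (by simp [← norm_ne_zero_iff, hunit])
  have hinv : HasDerivAt (fun t => ‖u t‖⁻¹) 0 x := by
    simpa using hnorm.fun_inv (by simp [hunit])
  simpa [hunit] using hinv.fun_smul hu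

theorem hasDerivAt_inv_norm_smul_add_smul {f d : E} (hf : ‖f‖ = 1) (hfd : ⟪f, d⟫ = 0) :
    HasDerivAt (fun t : ℝ => ‖f + t • d‖⁻¹ • (f + t • d)) d 0 := by
  have hline : HasDerivAt (fun t : ℝ => f + t • d) d 0 := by
    simpa using ((hasDerivAt_id (0 : ℝ)).smul_const d).const_add f
  exact hline.inv_norm_smul_of_inner_eq_zero (by simpa using hf) (by simpa using hfd)

end

/-- Smooth-case directional derivative of the entrywise term
`(2/π) arcsin ⟨f_i, f_j⟩` of the Goemans–Williamson expectation along a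
tangent direction. -/
theorem stmt_17 (k : ℕ) (fi fj : EuclideanSpace ℝ (Fin k))
    (hfi : ‖fi‖ = 1) (hfj : ‖fj‖ = 1) (hij : |⟪fi, fj⟫| < 1)
    (di dj : EuclideanSpace ℝ (Fin k)) (hdi : ⟪fi, di⟫ = 0) (hdj : ⟪fj, dj⟫ = 0) :
    HasDerivAt
      (fun t : ℝ => (2 / Real.pi) *
        Real.arcsin ⟪(‖fi + t • di‖⁻¹) • (fi + t • di), (‖fj + t • dj‖⁻¹) • (fj + t • dj)⟫)
      ((2 / Real.pi) * ((⟪fi, dj⟫ + ⟪fj, di⟫) / Real.sqrt (1 - ⟪fi, fj⟫ ^ 2)))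
      0 := by
  have hinner := (hasDerivAt_inv_norm_smul_add_smul hfi hdi).inner ℝ
    (hasDerivAt_inv_norm_smul_add_smul hfj hdj)
  simp only [zero_smul, add_zero, hfi, hfj, inv_one, one_smul, real_inner_comm fj di] at hinner
  have hval : ⟪‖fi + (0 : ℝ) • di‖⁻¹ • (fi + (0 : ℝ) • di),
      ‖fj + (0 : ℝ) • dj‖⁻¹ • (fj + (0 : ℝ) • dj)⟫ = ⟪fi, fj⟫ := by
    simp [hfi, hfj]
  obtain ⟨hlow, hhigh⟩ := abs_lt.mp hij
  have := (hinner.arcsin (hval ▸ hlow.ne') (hval ▸ hhigh.ne)).const_mul (2 / Real.pi)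
  rwa [hval] at this
end

section
/- Let E be a real inner product space, let g, h : E → ℝ be convex functions, let x₀ ∈ E, and let y ∈ E satisfy h(x) ≥ h(x₀) + ⟨y, x − x₀⟩ for all x ∈ E (i.e., y is a subgradient of h at x₀). Suppose x₁ ∈ E minimizes the function x ↦ g(x) − ⟨y, x⟩ over E. Then g(x₁) − h(x₁) ≤ g(x₀) − h(x₀). -/
open RealInnerProductSpace

/-- Monotone decrease property of the difference-of-convex minimization
algorithm. -/
theorem stmt_18 (E : Type*) [NormedAddCommGroup E] [InnerProductSpace ℝ E]
    (g h : E → ℝ) (hg : ConvexOn ℝ Set.univ g) (hh : ConvexOn ℝ Set.univ h)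
    (x₀ : E) (y : E) (hy : ∀ x, h x ≥ h x₀ + ⟪y, x - x₀⟫)
    (x₁ : E) (hx₁ : ∀ x, g x₁ - ⟪y, x₁⟫ ≤ g x - ⟪y, x⟫) :
    g x₁ - h x₁ ≤ g x₀ - h x₀ := by
  have h1 := hy x₁
  have h2 := hx₁ x₀
  rw [inner_sub_right] at h1
  linarith
end
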